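/- arXiv:1110.5569 — 3 statements merged into one kernel-verified Lean document; each statement's English description precedes it below -/
import Mathlib

section
/- If h : V → ℝ is harmonic on a connected open set V ⊆ ℂ containing the segment [0,1], bounded by 1 in absolute value on V, and h(1) = 0, then there exists a constant a with 0 ≤ a < 1, depending only on V (not on h), such that |h(0)| ≤ a. -/
/-!
Harnack's inequality: for `u ≥ 0` harmonic near `closedBall c R` and `‖w - c‖ ≤ R / 2`, the
Poisson kernel is at least `1/3` on the circle, so `u c ≤ 3 * u w`. A compact segment has a
uniform `δ`-neighbourhood inside `V`; walking from `1` to `0` in `N ≈ 2/δ` steps of length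
`≤ δ/2` gives `u 1 ≤ 3 ^ N * u 0`. Applied to the nonnegative harmonic functions `1 ± h`,
which equal `1` at `1`, this yields `|h 0| ≤ 1 - 3⁻ᴺ`.
-/

/-- A real-valued function on an open subset of `ℂ` is harmonic if it is `C²` there and
its Laplacian `∂²h/∂x² + ∂²h/∂y²` vanishes. -/
def HarmonicOnSet (h : ℂ → ℝ) (V : Set ℂ) : Prop :=
  ContDiffOn ℝ 2 h V ∧ ∀ z ∈ V,
    fderiv ℝ (fun w => fderiv ℝ h w 1) z 1
      + fderiv ℝ (fun w => fderiv ℝ h w Complex.I) z Complex.I = 0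

open Complex Metric Set InnerProductSpace Laplacian Real

theorem le_pow_mul_of_forall_le_mul {α : Type*} [Semiring α] [PartialOrder α] [IsOrderedRing α]
    {g : ℕ → α} {C : α} (hC : 0 ≤ C) {N : ℕ} (hg : ∀ k < N, g k ≤ C * g (k + 1)) :
    g 0 ≤ C ^ N * g N := by
  induction N with
  | zero => simp
  | succ N ih =>
    calc g 0 ≤ C ^ N * g N := ih fun k hk => hg k (by omega)
      _ ≤ C ^ N * (C * g (N + 1)) := by gcongr; exact hg N (by omega)
      _ = C ^ (N + 1) * g (N + 1) := by rw [pow_succ, mul_assoc]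

theorem exists_pos_forall_closedBall_subset_of_segment_subset {E : Type*}
    [NormedAddCommGroup E] [NormedSpace ℝ E] {a b : E} {V : Set E} (hV : IsOpen V)
    (hseg : segment ℝ a b ⊆ V) :
    ∃ δ, 0 < δ ∧ ∀ x ∈ segment ℝ a b, closedBall x δ ⊆ V := by
  have hcompact : IsCompact (segment ℝ a b) := by
    rw [segment_eq_image_lineMap]
    exact isCompact_Icc.image AffineMap.lineMap_continuous
  obtain ⟨δ, hδ, hδV⟩ := hcompact.exists_cthickening_subset_open hV hseg
  exact ⟨δ, hδ, fun x hx => (closedBall_subset_cthickening hx δ).trans hδV⟩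

theorem HarmonicOnSet.harmonicOnNhd {h : ℂ → ℝ} {V : Set ℂ} (hV : IsOpen V)
    (hh : HarmonicOnSet h V) : HarmonicOnNhd h V := by
  have hC2 : ∀ z ∈ V, ContDiffAt ℝ 2 h z := fun z hz => (hh.1 z hz).contDiffAt (hV.mem_nhds hz)
  refine fun z hz => ⟨hC2 z hz, ?_⟩
  filter_upwards [hV.mem_nhds hz] with y hy
  have hd : DifferentiableAt ℝ (fderiv ℝ h) y :=
    ((hC2 y hy).fderiv_right (m := 1) (by norm_num)).differentiableAt (by norm_num)
  have hlap := hh.2 y hy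
  rw [fderiv_clm_apply hd (differentiableAt_const _),
    fderiv_clm_apply hd (differentiableAt_const _)] at hlap
  simpa [laplacian_eq_iteratedFDeriv_complexPlane, iteratedFDeriv_two_apply] using hlap

theorem InnerProductSpace.HarmonicOnNhd.harnack_le {u : ℂ → ℝ} {c w : ℂ} {R : ℝ}
    (hu : HarmonicOnNhd u (closedBall c R)) (hpos : ∀ z ∈ sphere c R, 0 ≤ u z)
    (hw : w ∈ ball c R) :
    (R - ‖w - c‖) / (R + ‖w - c‖) * u c ≤ u w := by
  have hR : |R| = R := abs_of_pos (pos_of_mem_ball hw)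
  have hu_int : CircleIntegrable u c R :=
    (hu.continuousOn.mono (by rw [hR]; exact sphere_subset_closedBall)).circleIntegrable'
  have hP_cont : ContinuousOn (poissonKernel c w) (sphere c |R|) := by
    rw [poissonKernel_eq_re_herglotzRieszKernel]
    exact continuous_re.comp_continuousOn (continuousOn_herglotzRieszKernel_sphere hw)
  set k := (R - ‖w - c‖) / (R + ‖w - c‖)
  calc k * u c
      = circleAverage (k • u) c R := by
        rw [circleAverage_smul, HarmonicOnNhd.circleAverage_eq (by rwa [hR]), smul_eq_mul]
    _ ≤ circleAverage (poissonKernel c w • u) c R := by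
        refine circleAverage_mono hu_int.const_smul (hu_int.continuousOn_smul hP_cont)
          fun z hz => ?_
        rw [hR] at hz
        have hP := le_re_herglotzRieszKernel hz hw
        rw [← herglotzRieszKernel_def, ← Function.comp_apply (f := re),
          ← poissonKernel_eq_re_herglotzRieszKernel] at hP
        exact mul_le_mul_of_nonneg_right hP (hpos z hz)
    _ = u w := hu.circleAverage_poissonKernel_smul hw

theorem InnerProductSpace.HarmonicOnNhd.le_three_mul {u : ℂ → ℝ} {c w : ℂ} {R : ℝ}
    (hu : HarmonicOnNhd u (closedBall c R)) (hpos : ∀ z ∈ closedBall c R, 0 ≤ u z)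
    (hR : 0 < R) (hw : ‖w - c‖ ≤ R / 2) :
    u c ≤ 3 * u w := by
  have hw_mem : w ∈ ball c R := by rw [mem_ball, dist_eq_norm]; linarith
  have hk : 1 / 3 ≤ (R - ‖w - c‖) / (R + ‖w - c‖) := by
    rw [div_le_div_iff₀ (by norm_num) (by positivity)]; linarith
  have hc : 0 ≤ u c := hpos c (mem_closedBall_self hR.le)
  have := hu.harnack_le (fun z hz => hpos z (sphere_subset_closedBall hz)) hw_mem
  nlinarith

theorem InnerProductSpace.HarmonicOnNhd.le_three_pow_mul {u : ℂ → ℝ} {V : Set ℂ}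
    (hu : HarmonicOnNhd u V) (hpos : ∀ z ∈ V, 0 ≤ u z) {a b : ℂ} {δ : ℝ} (hδ : 0 < δ)
    (hV : ∀ x ∈ segment ℝ a b, closedBall x δ ⊆ V) {N : ℕ} (hN : 0 < N)
    (hab : ‖b - a‖ ≤ N * (δ / 2)) :
    u a ≤ 3 ^ N * u b := by
  have hN_pos : (0 : ℝ) < N := Nat.cast_pos.2 hN
  set p : ℕ → ℂ := fun k => AffineMap.lineMap a b ((k : ℝ) / N)
  have hp : ∀ k ≤ N, p k ∈ segment ℝ a b := fun k hk =>
    lineMap_mem_segment ℝ a b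
      ⟨by positivity, div_le_one_of_le₀ (by exact_mod_cast hk) hN_pos.le⟩
  have hstep : ∀ k < N, u (p k) ≤ 3 * u (p (k + 1)) := by
    intro k hk
    refine (hu.mono (hV _ (hp k hk.le))).le_three_mul
      (fun z hz => hpos z (hV _ (hp k hk.le) hz)) hδ ?_
    have hdist : dist ((k : ℝ) / N) ((k + 1 : ℕ) / N) = 1 / N := by
      rw [Real.dist_eq, abs_sub_comm, ← sub_div, abs_div, Nat.abs_cast]
      push_cast
      ring_nf
      simp
    rw [← dist_eq_norm, dist_comm, dist_lineMap_lineMap, hdist, dist_comm, dist_eq_norm,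
      div_mul_eq_mul_div, one_mul, div_le_iff₀ hN_pos]
    linarith
  simpa [p, hN_pos.ne'] using le_pow_mul_of_forall_le_mul (g := u ∘ p) (by norm_num) hstep

theorem harnack_value_at_zero_general (V : Set ℂ) (hV : IsOpen V)
    (hseg : segment ℝ (0 : ℂ) 1 ⊆ V) :
    ∃ a : ℝ, 0 ≤ a ∧ a < 1 ∧ ∀ h : ℂ → ℝ, HarmonicOnSet h V →
      (∀ z ∈ V, |h z| ≤ 1) → h 1 = 0 → |h 0| ≤ a := by
  obtain ⟨δ, hδ, hballs⟩ :=
    exists_pos_forall_closedBall_subset_of_segment_subset hV (segment_symm ℝ (1 : ℂ) 0 ▸ hseg)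
  obtain ⟨N, hN⟩ := exists_nat_ge (2 / δ)
  have hN_pos : 0 < N := by exact_mod_cast (by positivity : (0 : ℝ) < 2 / δ).trans_le hN
  have hlen : ‖(0 : ℂ) - 1‖ ≤ N * (δ / 2) := by
    rw [div_le_iff₀ hδ] at hN
    norm_num
    linarith
  have hq : 0 < (1 / 3 : ℝ) ^ N := by positivity
  have hq_le : (1 / 3 : ℝ) ^ N ≤ 1 := pow_le_one₀ (by norm_num) (by norm_num)
  refine ⟨1 - (1 / 3) ^ N, by linarith, by linarith, fun h hh hbound h1 => ?_⟩
  have hlower : ∀ u : ℂ → ℝ, HarmonicOnNhd u V → (∀ z ∈ V, 0 ≤ u z) → u 1 = 1 →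
      (1 / 3 : ℝ) ^ N ≤ u 0 := by
    intro u hu hpos hu1
    have := hu.le_three_pow_mul hpos hδ hballs hN_pos hlen
    rw [one_div_pow, div_le_iff₀ (by positivity), mul_comm]
    exact hu1 ▸ this
  have harm := hh.harmonicOnNhd hV
  have hplus := hlower (fun z => 1 + h z) ((harmonicOnNhd_const 1).add harm)
    (fun z hz => by linarith [(abs_le.1 (hbound z hz)).1]) (by simp [h1])
  have hminus := hlower (fun z => 1 - h z) ((harmonicOnNhd_const 1).sub harm)
    (fun z hz => by linarith [(abs_le.1 (hbound z hz)).2]) (by simp [h1])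
  exact abs_le.2 ⟨by linarith, by linarith⟩

/-- If `h` is harmonic on a connected open set `V ⊆ ℂ` containing the segment `[0,1]`,
bounded by `1` in absolute value on `V`, and `h(1) = 0`, then there is a constant
`0 ≤ a < 1`, depending only on `V`, with `|h(0)| ≤ a`. -/
theorem harnack_value_at_zero (V : Set ℂ) (hV : IsOpen V) (hVc : IsConnected V)
    (hseg : segment ℝ (0 : ℂ) 1 ⊆ V) :
    ∃ a : ℝ, 0 ≤ a ∧ a < 1 ∧ ∀ h : ℂ → ℝ, HarmonicOnSet h V →
      (∀ z ∈ V, |h z| ≤ 1) → h 1 = 0 → |h 0| ≤ a :=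
  harnack_value_at_zero_general V hV hseg
end

section
/- Let d ≥ 2, k > p ≥ 1 be integers and let χ_1 ≥ ⋯ ≥ χ_k be reals (Lyapunov exponents) such that the de Thélin entropy bound holds: for every index a with χ_{a-1} > χ_a, (k−p) log d ≤ (a−1) log d + 2 Σ_{i=a}^k max(χ_i, 0). Suppose moreover χ_1 + ⋯ + χ_{k−p+1} ≤ γ < 0. Then exactly k−p of the χ_i are positive, χ_{k−p} ≥ (log d)/2, and χ_{k−p+1} ≤ γ − ((k−p)/2) log d < −((k−p)/2) log d. -/
open Finset

/-- Arithmetic core of the hyperbolicity theorem: if `χ₁ ≥ ⋯ ≥ χ_k` satisfy the de Thélin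
entropy bound for entropy `(k−p) log d` at every admissible index, and
`χ₁ + ⋯ + χ_{k−p+1} ≤ γ < 0`, then exactly `k−p` of the `χᵢ` are positive,
`χ_{k−p} ≥ (log d)/2` and `χ_{k−p+1} ≤ γ − ((k−p)/2) log d < −((k−p)/2) log d`. -/
theorem lyapunov_hyperbolic (d k p : ℕ) (hd : 2 ≤ d) (hp : 1 ≤ p) (hpk : p < k)
    (χ : ℕ → ℝ) (hmono : ∀ i j : ℕ, 1 ≤ i → i ≤ j → j ≤ k → χ j ≤ χ i)
    (hdT : ∀ a : ℕ, 1 ≤ a → a ≤ k → (a = 1 ∨ χ a < χ (a - 1)) →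
      ((k : ℝ) - p) * Real.log d ≤
        ((a : ℝ) - 1) * Real.log d + 2 * ∑ i ∈ Finset.Icc a k, max (χ i) 0)
    (γ : ℝ) (hγ : ∑ i ∈ Finset.Icc 1 (k - p + 1), χ i ≤ γ) (hγ0 : γ < 0) :
    ((Finset.Icc 1 k).filter fun i => 0 < χ i).card = k - p ∧
    Real.log d / 2 ≤ χ (k - p) ∧
    χ (k - p + 1) ≤ γ - (((k : ℝ) - p) / 2) * Real.log d ∧
    χ (k - p + 1) < -((((k : ℝ) - p) / 2) * Real.log d) := by
  set m := k - p with hm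
  have hm1 : 1 ≤ m := Nat.le_sub_of_add_le (by omega)
  have hmk : m + 1 ≤ k := by omega
  have hcast : ((k : ℝ) - p) = (m : ℝ) := by
    rw [hm]; push_cast [Nat.cast_sub hpk.le]; ring
  have hlogd : 0 < Real.log d := by
    apply Real.log_pos; exact_mod_cast by omega
  -- χ (m+1) < 0
  have hsum_lb : ((m : ℝ) + 1) * χ (m + 1) ≤ ∑ i ∈ Finset.Icc 1 (m + 1), χ i := by
    have := Finset.card_nsmul_le_sum (Finset.Icc 1 (m + 1)) χ (χ (m + 1))
      (fun i hi => by
        simp only [Finset.mem_Icc] at hi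
        exact hmono i (m + 1) hi.1 hi.2 hmk)
    simpa [Nat.card_Icc, nsmul_eq_mul] using this
  have hχm1_neg : χ (m + 1) < 0 := by
    nlinarith [hγ, hγ0, hsum_lb, (by positivity : (0:ℝ) < (m : ℝ) + 1)]
  -- minimal index a with χ a ≤ χ m
  have hex : ∃ n, 1 ≤ n ∧ χ n ≤ χ m := ⟨m, hm1, le_refl _⟩
  set a := Nat.find hex with ha
  obtain ⟨ha1, haχ⟩ := Nat.find_spec hex
  have ham : a ≤ m := Nat.find_min' hex ⟨hm1, le_refl _⟩
  have hak : a ≤ k := le_trans ham (by omega)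
  -- for i ∈ [a, m], χ i = χ m
  have heq : ∀ i, a ≤ i → i ≤ m → χ i = χ m := by
    intro i hai him
    have h1 : χ i ≤ χ a := hmono a i ha1 hai (le_trans him (by omega))
    have h2 : χ m ≤ χ i := hmono i m (le_trans ha1 hai) him (by omega)
    linarith
  -- admissibility
  have hadm : a = 1 ∨ χ a < χ (a - 1) := by
    rcases Nat.eq_or_lt_of_le ha1 with h | h
    · left; omega
    · right
      have hmin := Nat.find_min hex (m := a - 1) (by omega)
      push_neg at hmin
      have := hmin (by omega)
      linarith
  -- apply de Thélin at a
  have hdTa := hdT a ha1 hak hadm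
  -- the sum: positives vanish beyond m
  have hsum_eq : ∑ i ∈ Finset.Icc a k, max (χ i) 0
      = ∑ i ∈ Finset.Icc a m, max (χ i) 0 := by
    refine (Finset.sum_subset (Finset.Icc_subset_Icc_right (by omega)) ?_).symm
    intro i hik him
    simp only [Finset.mem_Icc] at hik him
    have : m + 1 ≤ i := by omega
    have : χ i ≤ χ (m + 1) := hmono (m + 1) i (by omega) this hik.2
    have : χ i ≤ 0 := le_of_lt (lt_of_le_of_lt this hχm1_neg)
    simp [max_eq_right this]
  have hsum_const : ∑ i ∈ Finset.Icc a m, max (χ i) 0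
      = ((m + 1 - a : ℕ) : ℝ) * max (χ m) 0 := by
    rw [Finset.sum_congr rfl (fun i hi => by
      simp only [Finset.mem_Icc] at hi
      rw [heq i hi.1 hi.2])]
    simp [Nat.card_Icc]
  have hNpos : (0 : ℝ) < ((m + 1 - a : ℕ) : ℝ) := by
    have : 1 ≤ m + 1 - a := by omega
    exact_mod_cast this
  have hNcast : ((m + 1 - a : ℕ) : ℝ) = (m : ℝ) + 1 - a := by
    push_cast [Nat.cast_sub (by omega : a ≤ m + 1)]; ring
  -- derive max (χ m) 0 ≥ log d / 2
  have hmax : Real.log d / 2 ≤ max (χ m) 0 := by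
    rw [hcast] at hdTa
    rw [hsum_eq, hsum_const, hNcast] at hdTa
    have ha1' : (1 : ℝ) ≤ (a : ℝ) := by exact_mod_cast ha1
    nlinarith [hNpos, hNcast, hlogd]
  have hχm : Real.log d / 2 ≤ χ m := by
    rcases le_or_gt (χ m) 0 with h | h
    · rw [max_eq_right h] at hmax; linarith
    · rwa [max_eq_left h.le] at hmax
  -- sum bound: χ (m+1) ≤ γ - m * (log d / 2)
  have hsplit : ∑ i ∈ Finset.Icc 1 (m + 1), χ i
      = ∑ i ∈ Finset.Icc 1 m, χ i + χ (m + 1) := by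
    rw [← Finset.sum_Icc_succ_top (by omega : 1 ≤ m + 1)]
  have hlow : (m : ℝ) * (Real.log d / 2) ≤ ∑ i ∈ Finset.Icc 1 m, χ i := by
    have := Finset.card_nsmul_le_sum (Finset.Icc 1 m) χ (Real.log d / 2)
      (fun i hi => by
        simp only [Finset.mem_Icc] at hi
        exact le_trans hχm (hmono i m hi.1 hi.2 (by omega)))
    simpa [Nat.card_Icc, nsmul_eq_mul] using this
  have hfinal : χ (m + 1) ≤ γ - ((m : ℝ) / 2) * Real.log d := by
    rw [hsplit] at hγ
    linarith
  refine ⟨?_, hχm, by rwa [hcast], ?_⟩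
  · -- card
    have hfilter : (Finset.Icc 1 k).filter (fun i => 0 < χ i) = Finset.Icc 1 m := by
      ext i
      simp only [Finset.mem_filter, Finset.mem_Icc]
      constructor
      · rintro ⟨⟨h1, h2⟩, hpos⟩
        refine ⟨h1, ?_⟩
        by_contra h
        have : χ i ≤ χ (m + 1) := hmono (m + 1) i (by omega) (by omega) h2
        linarith
      · rintro ⟨h1, h2⟩
        refine ⟨⟨h1, by omega⟩, ?_⟩
        have : χ m ≤ χ i := hmono i m h1 h2 (by omega)
        linarith
    rw [hfilter, Nat.card_Icc]; omega
  · rw [hcast]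
    calc χ (m + 1) ≤ γ - ((m : ℝ) / 2) * Real.log d := hfinal
    _ < -(((m : ℝ) / 2) * Real.log d) := by linarith
end

section
/- Let d ≥ 2, k > p ≥ 1 and χ_1 ≥ ⋯ ≥ χ_k reals satisfying the de Thélin bound (k−p) log d ≤ (a−1) log d + 2 Σ_{i=a}^k max(χ_i,0) for all admissible a (indices where a = 1 or χ_{a-1} > χ_a). Then at least k−p of the χ_i are strictly positive; and if exactly k−p are positive, each positive exponent is ≥ (log d)/2. -/
/-!
If the first `c` exponents are the positive ones, the sum in the bound at `a = c + 1` vanishes,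
which forces `c ≥ k - p`. If `c = k - p`, take `a` to be the first index of the last positive
value `χ_c`; the bound then reads `(c + 1 - a) log d ≤ 2 (c + 1 - a) χ_c`.
-/

open Finset

theorem Finset.eq_Icc_one_card_of_downwardClosed {s : Finset ℕ} (h0 : 0 ∉ s)
    (hdown : ∀ i ∈ s, ∀ j, 1 ≤ j → j ≤ i → j ∈ s) : s = Icc 1 s.card := by
  refine (eq_of_subset_of_card_le (fun i hi => ?_) (by simp)).symm
  rw [mem_Icc] at hi
  by_contra his
  have hsub : s ⊆ Icc 1 (i - 1) := fun j hj => by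
    have hj0 : j ≠ 0 := fun h => h0 (h ▸ hj)
    have hji : j < i := lt_of_not_ge fun hij => his (hdown j hj i hi.1 hij)
    exact mem_Icc.mpr ⟨by omega, by omega⟩
  have := card_le_card hsub
  simp only [Nat.card_Icc] at this
  omega

noncomputable def posCount (χ : ℕ → ℝ) (k : ℕ) : ℕ :=
  ((Icc 1 k).filter fun i => 0 < χ i).card

/-- `L` plays the role of `log d`. -/
def DeThelinBound (χ : ℕ → ℝ) (k p : ℕ) (L : ℝ) : Prop :=
  ∀ a : ℕ, 1 ≤ a → a ≤ k → (a = 1 ∨ χ a < χ (a - 1)) →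
    ((k : ℝ) - p) * L ≤ ((a : ℝ) - 1) * L + 2 * ∑ i ∈ Icc a k, max (χ i) 0

section Antitone

variable {χ : ℕ → ℝ} {k : ℕ}

theorem posCount_le : posCount χ k ≤ k :=
  (card_filter_le _ _).trans (by simp)

theorem filter_pos_eq_Icc_posCount (hχ : AntitoneOn χ (Set.Icc 1 k)) :
    (Icc 1 k).filter (fun i => 0 < χ i) = Icc 1 (posCount χ k) := by
  refine eq_Icc_one_card_of_downwardClosed (by simp) fun i hi j hj hji => ?_
  simp only [mem_filter, mem_Icc] at hi ⊢
  refine ⟨⟨hj, hji.trans hi.1.2⟩, hi.2.trans_le ?_⟩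
  exact hχ ⟨hj, by omega⟩ ⟨by omega, hi.1.2⟩ hji

theorem pos_iff_le_posCount (hχ : AntitoneOn χ (Set.Icc 1 k)) {i : ℕ} (hi : 1 ≤ i)
    (hik : i ≤ k) : 0 < χ i ↔ i ≤ posCount χ k := by
  have := congrArg (i ∈ ·) (filter_pos_eq_Icc_posCount hχ)
  simp only [mem_filter, mem_Icc, eq_iff_iff] at this
  simpa [hi, hik] using this

theorem nonpos_of_posCount_lt (hχ : AntitoneOn χ (Set.Icc 1 k)) {i : ℕ} (hci : posCount χ k < i)
    (hik : i ≤ k) : χ i ≤ 0 :=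
  not_lt.mp fun h => hci.not_ge ((pos_iff_le_posCount hχ (by omega) hik).mp h)

theorem sum_max_zero_le_of_le_posCount_succ (hχ : AntitoneOn χ (Set.Icc 1 k)) {a : ℕ}
    (ha : 1 ≤ a) (hac : a ≤ posCount χ k + 1) :
    ∑ i ∈ Icc a k, max (χ i) 0 ≤ ((posCount χ k : ℝ) + 1 - a) * max (χ a) 0 := by
  set c := posCount χ k
  have hck : c ≤ k := posCount_le
  have hsplit : Icc a k = Icc a c ∪ Icc (c + 1) k := by
    ext x; simp only [mem_Icc, mem_union]; omega
  have hdisj : Disjoint (Icc a c) (Icc (c + 1) k) := by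
    rw [disjoint_left]; intro x hx hy; rw [mem_Icc] at hx hy; omega
  have hhead : ∀ i ∈ Icc a c, max (χ i) 0 ≤ max (χ a) 0 := fun i hi => by
    rw [mem_Icc] at hi
    exact max_le_max_right 0 (hχ ⟨ha, by omega⟩ ⟨by omega, by omega⟩ hi.1)
  have htail : ∀ i ∈ Icc (c + 1) k, max (χ i) 0 = 0 := fun i hi => by
    rw [mem_Icc] at hi
    exact max_eq_right (nonpos_of_posCount_lt hχ (by omega) hi.2)
  rw [hsplit, sum_union hdisj, sum_eq_zero htail, add_zero]
  refine (sum_le_card_nsmul _ _ _ hhead).trans_eq ?_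
  rw [Nat.card_Icc, nsmul_eq_mul, Nat.cast_sub hac]
  push_cast
  ring

variable {p : ℕ} {L : ℝ}

theorem sub_le_posCount (hχ : AntitoneOn χ (Set.Icc 1 k)) (hL : 0 < L)
    (hdT : DeThelinBound χ k p L) : k - p ≤ posCount χ k := by
  set c := posCount χ k
  rcases (posCount_le : c ≤ k).eq_or_lt with hck | hck
  · omega
  have hjump : c + 1 = 1 ∨ χ (c + 1) < χ (c + 1 - 1) := by
    rcases Nat.eq_zero_or_pos c with h0 | h0
    · exact .inl (by omega)
    · refine .inr ?_
      rw [Nat.add_sub_cancel]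
      exact (nonpos_of_posCount_lt hχ (by omega) hck).trans_lt
        ((pos_iff_le_posCount hχ h0 hck.le).mpr le_rfl)
  have hb := hdT (c + 1) (by omega) hck hjump
  have hsum : ∑ i ∈ Icc (c + 1) k, max (χ i) 0 ≤ 0 := by
    simpa [c] using sum_max_zero_le_of_le_posCount_succ hχ (a := c + 1) (by omega) le_rfl
  push_cast at hb
  have : ((k : ℝ) - p) ≤ c := le_of_mul_le_mul_right (by linarith) hL
  rw [tsub_le_iff_right]
  exact_mod_cast (by linarith : (k : ℝ) ≤ c + p)

theorem half_le_of_posCount_eq (hχ : AntitoneOn χ (Set.Icc 1 k)) (hdT : DeThelinBound χ k p L)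
    (hc : posCount χ k = k - p) {i : ℕ} (hi : 1 ≤ i) (hik : i ≤ k) (hχi : 0 < χ i) :
    L / 2 ≤ χ i := by
  set c := posCount χ k
  have hic : i ≤ c := (pos_iff_le_posCount hχ hi hik).mp hχi
  have hck : c ≤ k := posCount_le
  have hχc : 0 < χ c := (pos_iff_le_posCount hχ (by omega) hck).mpr le_rfl
  have hex : ∃ a, 1 ≤ a ∧ χ a = χ c := ⟨c, by omega, rfl⟩
  set a := Nat.find hex
  obtain ⟨ha, hac⟩ : 1 ≤ a ∧ χ a = χ c := Nat.find_spec hex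
  have hac' : a ≤ c := Nat.find_min' hex ⟨by omega, rfl⟩
  have hjump : a = 1 ∨ χ a < χ (a - 1) := by
    rcases ha.eq_or_lt with h | h
    · exact .inl h.symm
    · refine .inr (lt_of_le_of_ne (hχ ⟨by omega, by omega⟩ ⟨ha, by omega⟩ (by omega)) ?_)
      exact fun h' => Nat.find_min hex (by omega : a - 1 < a) ⟨by omega, h'.symm.trans hac⟩
  have hb := hdT a ha (by omega) hjump
  have hsum : ∑ i ∈ Icc a k, max (χ i) 0 ≤ ((c : ℝ) + 1 - a) * max (χ a) 0 :=
    sum_max_zero_le_of_le_posCount_succ hχ ha (by omega)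
  rw [hac, max_eq_left hχc.le] at hsum
  have hkp : ((k : ℝ) - p) = c := by rw [hc, Nat.cast_sub (by omega)]
  rw [hkp] at hb
  have hlen : (0 : ℝ) < c + 1 - a := by
    have : (a : ℝ) ≤ c := by exact_mod_cast hac'
    linarith
  have : L ≤ 2 * χ c := le_of_mul_le_mul_left (by linarith) hlen
  linarith [hχ ⟨hi, hik⟩ ⟨by omega, hck⟩ hic]

end Antitone

theorem lyapunov_positive_count_general (d k p : ℕ) (hd : 2 ≤ d)
    (χ : ℕ → ℝ) (hmono : ∀ i j : ℕ, 1 ≤ i → i ≤ j → j ≤ k → χ j ≤ χ i)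
    (hdT : ∀ a : ℕ, 1 ≤ a → a ≤ k → (a = 1 ∨ χ a < χ (a - 1)) →
      ((k : ℝ) - p) * Real.log d ≤
        ((a : ℝ) - 1) * Real.log d + 2 * ∑ i ∈ Finset.Icc a k, max (χ i) 0) :
    k - p ≤ ((Finset.Icc 1 k).filter fun i => 0 < χ i).card ∧
    (((Finset.Icc 1 k).filter fun i => 0 < χ i).card = k - p →
      ∀ i : ℕ, 1 ≤ i → i ≤ k → 0 < χ i → Real.log d / 2 ≤ χ i) := by
  have hχ : AntitoneOn χ (Set.Icc 1 k) := fun i hi j hj hij => hmono i j hi.1 hij hj.2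
  have hL : 0 < Real.log d := Real.log_pos (by exact_mod_cast hd)
  exact ⟨sub_le_posCount hχ hL hdT, fun hc _ => half_le_of_posCount_eq hχ hdT hc⟩

/-- If `χ₁ ≥ ⋯ ≥ χ_k` satisfy the de Thélin bound
`(k−p) log d ≤ (a−1) log d + 2 Σ_{i=a}^k χᵢ⁺` at every admissible index `a`, then at
least `k−p` of the `χᵢ` are strictly positive; and if exactly `k−p` are positive, then
every positive exponent is at least `(log d)/2`. -/
theorem lyapunov_positive_count (d k p : ℕ) (hd : 2 ≤ d) (hp : 1 ≤ p) (hpk : p < k)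
    (χ : ℕ → ℝ) (hmono : ∀ i j : ℕ, 1 ≤ i → i ≤ j → j ≤ k → χ j ≤ χ i)
    (hdT : ∀ a : ℕ, 1 ≤ a → a ≤ k → (a = 1 ∨ χ a < χ (a - 1)) →
      ((k : ℝ) - p) * Real.log d ≤
        ((a : ℝ) - 1) * Real.log d + 2 * ∑ i ∈ Finset.Icc a k, max (χ i) 0) :
    k - p ≤ ((Finset.Icc 1 k).filter fun i => 0 < χ i).card ∧
    (((Finset.Icc 1 k).filter fun i => 0 < χ i).card = k - p →
      ∀ i : ℕ, 1 ≤ i → i ≤ k → 0 < χ i → Real.log d / 2 ≤ χ i) :=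
  lyapunov_positive_count_general d k p hd χ hmono hdT
end
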